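/- Let k be a rational number with k ∉ {0, 2, −2}, and set a = a(k), b = b(k), c = c(k). Then the subgroup of E_k(ℚ) consisting of the point at infinity together with the three points (−ab, 0), (−bc, 0), (−ac, 0) is a subgroup of order 4 isomorphic to (ℤ/2ℤ) × (ℤ/2ℤ), and the two rational points (0, abc) and (0, −abc) of E_k do not belong to this subgroup. -/

import Mathlib

/-- The side `a(k) = 5k² − 4k + 4` of the Heron triangle family. -/
def sideA (k : ℚ) : ℚ := 5 * k ^ 2 - 4 * k + 4

/-- The side `b(k) = (1/2)k(k² − 4k + 20)` of the Heron triangle family. -/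
def sideB (k : ℚ) : ℚ := (1 / 2) * k * (k ^ 2 - 4 * k + 20)

/-- The side `c(k) = (1/2)(k+2)(k² − 4)` of the Heron triangle family. -/
def sideC (k : ℚ) : ℚ := (1 / 2) * (k + 2) * (k ^ 2 - 4)
/-- The elliptic curve `E_k : y² = (x + ab)(x + bc)(x + ac)`, written as the Weierstrass
curve `y² = x³ + (ab + bc + ca)x² + abc(a + b + c)x + (abc)²`. -/
def Ek (k : ℚ) : WeierstrassCurve.Affine ℚ where
  a₁ := 0
  a₂ := sideA k * sideB k + sideB k * sideC k + sideC k * sideA k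
  a₃ := 0
  a₄ := sideA k * sideB k * sideC k * (sideA k + sideB k + sideC k)
  a₆ := (sideA k * sideB k * sideC k) ^ 2

/-!
Writing `e₁ = -ab`, `e₂ = -bc`, `e₃ = -ac`, the curve is `y² = (x - e₁)(x - e₂)(x - e₃)`. On such a
curve `P = -P` exactly when `y = 0`, so the 2-torsion subgroup `E[2]` consists of `0` and the
`(eᵢ, 0)`; it has exponent two, hence is a Klein four-group as soon as the `eᵢ` are distinct, and it
misses `(0, ±abc)` because `abc ≠ 0`. Distinctness of the `eᵢ` (which also makes the discriminant
`16 ∏ (eᵢ - eⱼ)²` nonzero) reduces to `a, b, c` being nonzero and pairwise distinct; for the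
latter, `a = b`, `b = c` and `a = c` would give a rational `√2`, a rational `√3`, and a rational root
of `k³ - 8k² + 4k - 16`.
-/

namespace WeierstrassCurve

variable {F : Type*} [Field F] {e₁ e₂ e₃ x y : F}

/-- The Weierstrass curve `y² = (x - e₁)(x - e₂)(x - e₃)`. -/
def ofRoots (e₁ e₂ e₃ : F) : WeierstrassCurve F where
  a₁ := 0
  a₂ := -(e₁ + e₂ + e₃)
  a₃ := 0
  a₄ := e₁ * e₂ + e₁ * e₃ + e₂ * e₃
  a₆ := -(e₁ * e₂ * e₃)

lemma ofRoots_Δ : (ofRoots e₁ e₂ e₃).Δ = 16 * ((e₁ - e₂) * (e₁ - e₃) * (e₂ - e₃)) ^ 2 := by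
  simp only [Δ, b₂, b₄, b₆, b₈, ofRoots]
  ring

namespace Affine

lemma equation_ofRoots_iff :
    (ofRoots e₁ e₂ e₃).toAffine.Equation x y ↔ y ^ 2 = (x - e₁) * (x - e₂) * (x - e₃) := by
  rw [equation_iff]
  simp only [ofRoots]
  constructor <;> intro h <;> linear_combination h

lemma nonsingular_ofRoots (h2 : (2 : F) ≠ 0) (h₁₂ : e₁ ≠ e₂) (h₁₃ : e₁ ≠ e₃) (h₂₃ : e₂ ≠ e₃)
    (h : y ^ 2 = (x - e₁) * (x - e₂) * (x - e₃)) : (ofRoots e₁ e₂ e₃).toAffine.Nonsingular x y := by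
  refine (equation_iff_nonsingular_of_Δ_ne_zero ?_).mp (equation_ofRoots_iff.mpr h)
  rw [ofRoots_Δ, show (16 : F) = 2 ^ 4 by norm_num]
  exact mul_ne_zero (pow_ne_zero _ h2) (pow_ne_zero _ (mul_ne_zero (mul_ne_zero
    (sub_ne_zero.mpr h₁₂) (sub_ne_zero.mpr h₁₃)) (sub_ne_zero.mpr h₂₃)))

lemma negY_ofRoots : (ofRoots e₁ e₂ e₃).toAffine.negY x y = -y := by
  simp [negY, ofRoots]

variable [DecidableEq F]

lemma some_mem_torsionBy_two_ofRoots_iff (h2 : (2 : F) ≠ 0)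
    {h : (ofRoots e₁ e₂ e₃).toAffine.Nonsingular x y} :
    Point.some x y h ∈ AddSubgroup.torsionBy _ 2 ↔ y = 0 := by
  rw [← Nat.cast_two, AddSubgroup.torsionBy.nsmul_iff, two_nsmul, add_eq_zero_iff_eq_neg,
    Point.neg_some, Point.some.injEq, negY_ofRoots]
  simp [eq_neg_iff_add_eq_zero, ← two_mul, h2]

lemma coe_torsionBy_two_ofRoots (h2 : (2 : F) ≠ 0)
    (h₁ : (ofRoots e₁ e₂ e₃).toAffine.Nonsingular e₁ 0)
    (h₂ : (ofRoots e₁ e₂ e₃).toAffine.Nonsingular e₂ 0)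
    (h₃ : (ofRoots e₁ e₂ e₃).toAffine.Nonsingular e₃ 0) :
    (AddSubgroup.torsionBy (ofRoots e₁ e₂ e₃).toAffine.Point 2 : Set _) =
      {0, Point.some _ _ h₁, Point.some _ _ h₂, Point.some _ _ h₃} := by
  ext (_ | ⟨x, y, h⟩)
  · simp [← Point.zero_def]
  · have hxy := equation_ofRoots_iff.mp h.1
    simp only [SetLike.mem_coe, some_mem_torsionBy_two_ofRoots_iff h2, Set.mem_insert_iff,
      Set.mem_singleton_iff, reduceCtorEq, Point.some.injEq, false_or]
    constructor
    · rintro rfl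
      rw [zero_pow two_ne_zero, eq_comm, mul_eq_zero, mul_eq_zero, sub_eq_zero, sub_eq_zero,
        sub_eq_zero] at hxy
      tauto
    · rintro (⟨-, rfl⟩ | ⟨-, rfl⟩ | ⟨-, rfl⟩) <;> rfl

lemma card_torsionBy_two_ofRoots (h2 : (2 : F) ≠ 0) (h₁₂ : e₁ ≠ e₂) (h₁₃ : e₁ ≠ e₃)
    (h₂₃ : e₂ ≠ e₃) : Nat.card (AddSubgroup.torsionBy (ofRoots e₁ e₂ e₃).toAffine.Point 2) = 4 := by
  have hns := fun {x : F} (hx : (x - e₁) * (x - e₂) * (x - e₃) = 0) ↦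
    nonsingular_ofRoots (y := 0) h2 h₁₂ h₁₃ h₂₃ (by rw [hx]; ring)
  rw [← SetLike.coe_sort_coe, coe_torsionBy_two_ofRoots h2 (hns (by ring)) (hns (by ring))
    (hns (by ring)), Nat.card_coe_set_eq, Set.ncard_insert_of_notMem, Set.ncard_insert_of_notMem,
    Set.ncard_pair] <;> simp [h₁₂, h₁₃, h₂₃]

end Affine
end WeierstrassCurve

lemma AddSubgroup.isAddKleinFour_torsionBy_two {A : Type*} [AddCommGroup A]
    (h : Nat.card (torsionBy A 2) = 4) : IsAddKleinFour (torsionBy A 2) where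
  card_four := h
  exponent_two := by
    have hdvd : AddMonoid.exponent (torsionBy A 2) ∣ 2 :=
      AddMonoid.exponent_dvd_of_forall_nsmul_eq_zero fun g ↦ torsionBy.nsmul (n := 2) g
    have hne : AddMonoid.exponent (torsionBy A 2) ≠ 1 := by
      intro h1
      rw [AddMonoid.exp_eq_one_iff] at h1
      have := Nat.card_of_subsingleton (0 : torsionBy A 2)
      omega
    exact ((Nat.dvd_prime Nat.prime_two).mp hdvd).resolve_left hne

open Polynomial in
lemma no_rational_root_cubic (k : ℚ) : k ^ 3 - 8 * k ^ 2 + 4 * k - 16 ≠ 0 := by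
  intro h
  -- A rational root of a monic integer polynomial is an integer `m`, and then
  -- `(m - 8)(m² + 4) = -16` forces `|m| ≤ 3`.
  obtain ⟨m, rfl⟩ : IsLocalization.IsInteger ℤ k :=
    isInteger_of_is_root_of_monic (p := X ^ 3 - C 8 * X ^ 2 + C 4 * X - C 16) (by monicity!)
      (by simp only [map_sub, map_add, map_mul, map_pow, aeval_X, map_ofNat]; exact h)
  have hm : m ^ 3 - 8 * m ^ 2 + 4 * m - 16 = 0 := by simp at h; exact_mod_cast h
  have : m < 8 := by nlinarith
  have : m ^ 2 ≤ 12 := by nlinarith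
  have : -3 ≤ m := by nlinarith
  have : m ≤ 3 := by nlinarith
  interval_cases m <;> norm_num at hm

section Sides

variable {k : ℚ}

lemma sideA_ne_zero : sideA k ≠ 0 := by
  unfold sideA
  nlinarith [sq_nonneg (2 * k - 1), sq_nonneg k]

lemma sideB_ne_zero (h0 : k ≠ 0) : sideB k ≠ 0 := by
  have : k ^ 2 - 4 * k + 20 ≠ 0 := by nlinarith [sq_nonneg (k - 2)]
  unfold sideB
  positivity

lemma sideC_ne_zero (h2 : k ≠ 2) (hm2 : k ≠ -2) : sideC k ≠ 0 := by
  have h2' : k - 2 ≠ 0 := sub_ne_zero.mpr h2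
  have hm2' : k + 2 ≠ 0 := by rwa [← sub_neg_eq_add, sub_ne_zero]
  have : sideC k = (1 / 2) * (k + 2) ^ 2 * (k - 2) := by unfold sideC; ring
  rw [this]
  positivity

lemma sideA_ne_sideB (h2 : k ≠ 2) : sideA k ≠ sideB k := by
  intro h
  have hq : k ^ 2 - 12 * k + 4 = 0 := by
    have : (k - 2) * (k ^ 2 - 12 * k + 4) = 0 := by
      unfold sideA sideB at h; linear_combination -2 * h
    exact (mul_eq_zero.mp this).resolve_left (sub_ne_zero.mpr h2)
  have : ¬ IsSquare (2 : ℚ) := by exact_mod_cast (show ¬ IsSquare (2 : ℕ) by norm_num)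
  exact this ⟨(k - 6) / 4, by linear_combination -hq / 16⟩

lemma sideB_ne_sideC : sideB k ≠ sideC k := by
  intro h
  have : ¬ IsSquare (3 : ℚ) := by exact_mod_cast (show ¬ IsSquare (3 : ℕ) by norm_num)
  exact this ⟨(3 * k - 6) / 4, by unfold sideB sideC at h; linear_combination 3 * h / 16⟩

lemma sideA_ne_sideC : sideA k ≠ sideC k := fun h ↦
  no_rational_root_cubic k (by unfold sideA sideC at h; linear_combination -2 * h)

lemma Ek_eq_ofRoots : Ek k = (WeierstrassCurve.ofRoots (-(sideA k * sideB k))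
    (-(sideB k * sideC k)) (-(sideA k * sideC k))).toAffine := by
  ext <;> simp only [Ek, WeierstrassCurve.ofRoots] <;> ring

end Sides

open WeierstrassCurve.Affine in
/-- for rational `k ∉ {0, 2, −2}`, the point at infinity together with
`(−ab, 0)`, `(−bc, 0)`, `(−ac, 0)` forms a subgroup of `E_k(ℚ)` of order `4`
isomorphic to `(ℤ/2ℤ) × (ℤ/2ℤ)`, and the rational points `(0, abc)` and `(0, −abc)`
of `E_k` do not belong to this subgroup. -/
theorem two_torsion_subgroup (k : ℚ) (h0 : k ≠ 0) (h2 : k ≠ 2) (hm2 : k ≠ -2) :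
    ∃ (h1 : (Ek k).Nonsingular (-(sideA k * sideB k)) 0)
      (h2 : (Ek k).Nonsingular (-(sideB k * sideC k)) 0)
      (h3 : (Ek k).Nonsingular (-(sideA k * sideC k)) 0)
      (h4 : (Ek k).Nonsingular 0 (sideA k * sideB k * sideC k))
      (h5 : (Ek k).Nonsingular 0 (-(sideA k * sideB k * sideC k)))
      (H : AddSubgroup (Ek k).Point),
      (H : Set (Ek k).Point) =
        {Point.zero, Point.some _ _ h1, Point.some _ _ h2, Point.some _ _ h3} ∧
      Nat.card H = 4 ∧
      Nonempty (H ≃+ ZMod 2 × ZMod 2) ∧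
      Point.some _ _ h4 ∉ H ∧ Point.some _ _ h5 ∉ H := by
  have hA := sideA_ne_zero (k := k)
  have hB := sideB_ne_zero h0
  have hC := sideC_ne_zero h2 hm2
  have h₁₂ : -(sideA k * sideB k) ≠ -(sideB k * sideC k) := fun h ↦
    sideA_ne_sideC (mul_left_cancel₀ hB (by linear_combination -h))
  have h₁₃ : -(sideA k * sideB k) ≠ -(sideA k * sideC k) := fun h ↦
    sideB_ne_sideC (mul_left_cancel₀ hA (by linear_combination -h))
  have h₂₃ : -(sideB k * sideC k) ≠ -(sideA k * sideC k) := fun h ↦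
    sideA_ne_sideB h2 (mul_right_cancel₀ hC (by linear_combination -h)).symm
  have hns := fun {x y : ℚ} ↦ nonsingular_ofRoots (x := x) (y := y) two_ne_zero h₁₂ h₁₃ h₂₃
  have habc : sideA k * sideB k * sideC k ≠ 0 := by positivity
  rw [Ek_eq_ofRoots]
  have := AddSubgroup.isAddKleinFour_torsionBy_two
    (card_torsionBy_two_ofRoots two_ne_zero h₁₂ h₁₃ h₂₃)
  refine ⟨hns (by ring), hns (by ring), hns (by ring), hns (by ring), hns (by ring),
    AddSubgroup.torsionBy _ 2, coe_torsionBy_two_ofRoots two_ne_zero _ _ _,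
    IsAddKleinFour.card_four, IsAddKleinFour.nonempty_addEquiv, ?_, ?_⟩ <;>
  simp [some_mem_torsionBy_two_ofRoots_iff two_ne_zero, habc]
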